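/- Fix 0 < q < 1 and let f(r) = (1 − r²) ∏_{j=1}^{∞} [((1 − q^{2j} r²)(1 − q^{2j}/r²))/(1 − q^{2j})²]^{(−1)^j} for r ∈ (q,1). Then f is strictly monotone decreasing on (q,1); in particular f has no critical points in (q,1). -/

import Mathlib

/-!
Write `mityukRadiusRad q r = (1 - r²) · exp T(r)` with
`T(r) = ∑ⱼ (-1)^(j+1) log R(q^(2j+2), r)` and `R(a, r) = (1 - a r²)(1 - a/r²)/(1 - a)²`.
The logarithmic derivative of `R(a, ·)` is `2a(1 - r⁴)/(r(r² - a)(1 - a r²))`, which for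
`0 ≤ a < r² < 1` is nonnegative and increasing in `a`.
As `q^(2j+2)` decreases in `j`, `T'(r)` is an alternating series with decreasing terms whose first
term is negative, so `T'(r) ≤ 0` and `f'(r) = e^T(r) (-2r + (1 - r²) T'(r)) < 0`.
-/

/-- Mityuk's radius for the annulus `{q < |z| < 1}` with respect to the radial-slit
canonical domain (alternating exponents `(−1)^j`). -/
noncomputable def mityukRadiusRad (q r : ℝ) : ℝ :=
  (1 - r ^ 2) *
    ∏' j : ℕ,
      ((((1 - q ^ (2 * (j + 1)) * r ^ 2) * (1 - q ^ (2 * (j + 1)) / r ^ 2)) /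
        (1 - q ^ (2 * (j + 1))) ^ 2) ^ ((-1 : ℤ) ^ (j + 1)))

open Real Set

noncomputable def radialFactor (a r : ℝ) : ℝ := (1 - a * r ^ 2) * (1 - a / r ^ 2) / (1 - a) ^ 2

noncomputable def radialFactorLogDeriv (a r : ℝ) : ℝ :=
  2 * a * (1 - r ^ 4) / (r * (r ^ 2 - a) * (1 - a * r ^ 2))

section RadialFactor

variable {a b c r : ℝ}

theorem radialFactor_pos (hr0 : 0 < r) (hr1 : r < 1) (har : a < r ^ 2) :
    0 < radialFactor a r := by
  have hr2 : r ^ 2 < 1 := pow_lt_one₀ hr0.le hr1 two_ne_zero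
  have : a / r ^ 2 < 1 := (div_lt_one (by positivity)).2 har
  unfold radialFactor
  apply div_pos (mul_pos _ _) _ <;> nlinarith

theorem radialFactor_sub_one (hr : r ≠ 0) (ha : a ≠ 1) :
    radialFactor a r - 1 = -(r - r⁻¹) ^ 2 * (a / (1 - a) ^ 2) := by
  have : 1 - a ≠ 0 := sub_ne_zero.2 (Ne.symm ha)
  unfold radialFactor
  field_simp
  ring

theorem hasDerivAt_log_radialFactor (hr0 : 0 < r) (hr1 : r < 1) (har : a < r ^ 2) :
    HasDerivAt (fun y => log (radialFactor a y)) (radialFactorLogDeriv a r) r := by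
  have hr2 : r ^ 2 < 1 := pow_lt_one₀ hr0.le hr1 two_ne_zero
  have har' : 1 - a * r ^ 2 ≠ 0 := by nlinarith
  have ha1 : 1 - a ≠ 0 := by linarith
  have h1 : HasDerivAt (fun y => 1 - a * y ^ 2) (-(2 * a * r)) r :=
    (((hasDerivAt_pow 2 r).const_mul a).const_sub 1).congr_deriv (by norm_num; ring)
  have h2 : HasDerivAt (fun y => 1 - a / y ^ 2) (2 * a / r ^ 3) r :=
    (((hasDerivAt_const r a).div (hasDerivAt_pow 2 r) (by positivity)).const_sub 1).congr_deriv
      (by field_simp; ring)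
  have h : HasDerivAt (radialFactor a)
      ((-(2 * a * r) * (1 - a / r ^ 2) + (1 - a * r ^ 2) * (2 * a / r ^ 3)) / (1 - a) ^ 2) r :=
    (h1.mul h2).div_const _
  refine (h.log (radialFactor_pos hr0 hr1 har).ne').congr_deriv ?_
  unfold radialFactor radialFactorLogDeriv
  field_simp
  ring

theorem radialFactorLogDeriv_nonneg (hr0 : 0 < r) (hr1 : r < 1) (ha0 : 0 ≤ a) (har : a < r ^ 2) :
    0 ≤ radialFactorLogDeriv a r := by
  have hr4 : r ^ 4 < 1 := pow_lt_one₀ hr0.le hr1 four_ne_zero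
  unfold radialFactorLogDeriv
  apply div_nonneg (by nlinarith) (mul_pos (mul_pos hr0 (by linarith)) (by nlinarith)).le

theorem radialFactorLogDeriv_le_radialFactorLogDeriv (hr0 : 0 < r) (hr1 : r < 1) (ha0 : 0 ≤ a)
    (hab : a ≤ b) (hbr : b < r ^ 2) : radialFactorLogDeriv a r ≤ radialFactorLogDeriv b r := by
  have hr4 : r ^ 4 < 1 := pow_lt_one₀ hr0.le hr1 four_ne_zero
  have hbr' : b * r ^ 2 < 1 := by nlinarith
  unfold radialFactorLogDeriv
  gcongr <;> nlinarith

theorem radialFactorLogDeriv_le (hc0 : 0 < c) (hcr : c ≤ r) (hr1 : r < 1) (ha0 : 0 ≤ a)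
    (hab : a ≤ b) (hbc : b < c ^ 2) :
    radialFactorLogDeriv a r ≤ 2 * a / (c * (c ^ 2 - b) * (1 - b)) := by
  have hr0 := hc0.trans_le hcr
  have hc2 : c ^ 2 ≤ r ^ 2 := pow_le_pow_left₀ hc0.le hcr 2
  have hr2 : r ^ 2 < 1 := pow_lt_one₀ hr0.le hr1 two_ne_zero
  have har : a * r ^ 2 ≤ b := by nlinarith
  unfold radialFactorLogDeriv
  apply div_le_div₀ (by positivity) (by nlinarith [mul_nonneg ha0 (pow_nonneg hr0.le 4)])
    (by apply mul_pos <;> nlinarith)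
  gcongr <;> nlinarith

end RadialFactor

theorem Antitone.tsum_neg_one_pow_succ_mul_nonpos {E : Type*} [Ring E] [PartialOrder E]
    [IsOrderedRing E] [TopologicalSpace E] [IsTopologicalAddGroup E] [OrderClosedTopology E]
    {f : ℕ → E}
    (hf : Antitone f) (hs : Summable fun i => (-1) ^ (i + 1) * f i) :
    ∑' i, (-1) ^ (i + 1) * f i ≤ 0 := by
  have hs' : Summable fun i => (-1) ^ i * f i := by simpa [pow_succ] using hs.neg
  have h := hf.alternating_series_le_tendsto hs'.hasSum.tendsto_sum_nat 0
  simp only [mul_zero, Finset.range_zero, Finset.sum_empty] at h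
  simpa [pow_succ, tsum_neg] using h

noncomputable def mityukFactor (q : ℝ) (j : ℕ) (r : ℝ) : ℝ :=
  radialFactor (q ^ (2 * (j + 1))) r ^ ((-1 : ℤ) ^ (j + 1))

section MityukRadius

variable {q r : ℝ}

theorem pow_two_mul_succ_le_sq (hq0 : 0 ≤ q) (hq1 : q ≤ 1) (j : ℕ) :
    q ^ (2 * (j + 1)) ≤ q ^ 2 :=
  pow_le_pow_of_le_one hq0 hq1 (by omega)

theorem antitone_pow_two_mul_succ (hq0 : 0 ≤ q) (hq1 : q ≤ 1) :
    Antitone fun j : ℕ => q ^ (2 * (j + 1)) :=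
  antitone_nat_of_succ_le fun _ => pow_le_pow_of_le_one hq0 hq1 (by omega)

theorem summable_pow_two_mul_succ (hq0 : 0 ≤ q) (hq1 : q < 1) :
    Summable fun j : ℕ => q ^ (2 * (j + 1)) := by
  simp_rw [pow_mul]
  exact (summable_nat_add_iff 1).2 (summable_geometric_of_lt_one (sq_nonneg q) (by nlinarith))

theorem log_mityukFactor (q : ℝ) (j : ℕ) (r : ℝ) :
    log (mityukFactor q j r) = (-1) ^ (j + 1) * log (radialFactor (q ^ (2 * (j + 1))) r) := by
  rw [mityukFactor, log_zpow]
  push_cast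
  rfl

theorem summable_log_mityukFactor (hq0 : 0 ≤ q) (hq1 : q < 1) (hr : r ≠ 0) :
    Summable fun j => log (mityukFactor q j r) := by
  have hq2 : q ^ 2 < 1 := pow_lt_one₀ hq0 hq1 two_ne_zero
  have hmajor : Summable fun j => q ^ (2 * (j + 1)) / (1 - q ^ (2 * (j + 1))) ^ 2 := by
    refine ((summable_pow_two_mul_succ hq0 hq1).div_const ((1 - q ^ 2) ^ 2)).of_nonneg_of_le
      (fun j => by positivity) fun j => ?_
    have := pow_two_mul_succ_le_sq hq0 hq1.le j
    gcongr
  have hlog : Summable fun j => log (radialFactor (q ^ (2 * (j + 1))) r) := by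
    convert summable_log_one_add_of_summable (hmajor.mul_left (-(r - r⁻¹) ^ 2)) using 2 with j
    have := pow_two_mul_succ_le_sq hq0 hq1.le j
    rw [← radialFactor_sub_one hr (by linarith), add_sub_cancel]
  simp_rw [log_mityukFactor]
  exact summable_abs_iff.1 (by simpa [abs_mul] using hlog.abs)

theorem mityukRadiusRad_eq_mul_exp (hq0 : 0 ≤ q) (hq1 : q < 1) (hqr : q < r) (hr1 : r < 1) :
    mityukRadiusRad q r = (1 - r ^ 2) * exp (∑' j, log (mityukFactor q j r)) := by
  have hr0 : 0 < r := hq0.trans_lt hqr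
  have hq2r : q ^ 2 < r ^ 2 := pow_lt_pow_left₀ hqr hq0 two_ne_zero
  have hpos j : 0 < mityukFactor q j r :=
    zpow_pos (radialFactor_pos hr0 hr1 ((pow_two_mul_succ_le_sq hq0 hq1.le j).trans_lt hq2r)) _
  rw [rexp_tsum_eq_tprod hpos (summable_log_mityukFactor hq0 hq1 hr0.ne')]
  rfl

theorem norm_neg_one_pow_mul_radialFactorLogDeriv_le {c : ℝ} (hq0 : 0 ≤ q) (hq1 : q < 1)
    (hqc : q < c) (hcr : c ≤ r) (hr1 : r < 1) (j : ℕ) :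
    ‖(-1) ^ (j + 1) * radialFactorLogDeriv (q ^ (2 * (j + 1))) r‖ ≤
      2 * q ^ (2 * (j + 1)) / (c * (c ^ 2 - q ^ 2) * (1 - q ^ 2)) := by
  have hc0 : 0 < c := hq0.trans_lt hqc
  have hq2c : q ^ 2 < c ^ 2 := pow_lt_pow_left₀ hqc hq0 two_ne_zero
  have hc2r : c ^ 2 ≤ r ^ 2 := pow_le_pow_left₀ hc0.le hcr 2
  have ha := pow_two_mul_succ_le_sq hq0 hq1.le j
  rw [norm_mul, norm_pow, norm_neg, norm_one, one_pow, one_mul, norm_of_nonneg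
    (radialFactorLogDeriv_nonneg (hc0.trans_le hcr) hr1 (by positivity) (by linarith))]
  exact radialFactorLogDeriv_le hc0 hcr hr1 (by positivity) ha hq2c

theorem hasDerivAt_tsum_log_mityukFactor (hq0 : 0 ≤ q) (hq1 : q < 1) (hqr : q < r)
    (hr1 : r < 1) :
    HasDerivAt (fun y => ∑' j, log (mityukFactor q j y))
      (∑' j, (-1) ^ (j + 1) * radialFactorLogDeriv (q ^ (2 * (j + 1))) r) r := by
  obtain ⟨c, hqc, hcr⟩ := exists_between hqr
  refine hasDerivAt_tsum_of_isPreconnected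
    ((summable_pow_two_mul_succ hq0 hq1).mul_left 2 |>.div_const _) isOpen_Ioo isPreconnected_Ioo
    (fun j y hy => ?_)
    (fun j y hy => norm_neg_one_pow_mul_radialFactorLogDeriv_le hq0 hq1 hqc hy.1.le hy.2 j)
    ⟨hcr, hr1⟩ (summable_log_mityukFactor hq0 hq1 (hq0.trans_lt hqr).ne') ⟨hcr, hr1⟩
  have hq2y : q ^ 2 < y ^ 2 := pow_lt_pow_left₀ (hqc.trans hy.1) hq0 two_ne_zero
  simp_rw [log_mityukFactor]
  exact (hasDerivAt_log_radialFactor (hq0.trans_lt (hqc.trans hy.1)) hy.2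
    ((pow_two_mul_succ_le_sq hq0 hq1.le j).trans_lt hq2y)).const_mul _

theorem tsum_neg_one_pow_mul_radialFactorLogDeriv_nonpos (hq0 : 0 ≤ q) (hq1 : q < 1) (hqr : q < r)
    (hr1 : r < 1) : ∑' j, (-1) ^ (j + 1) * radialFactorLogDeriv (q ^ (2 * (j + 1))) r ≤ 0 := by
  have hr0 : 0 < r := hq0.trans_lt hqr
  have hq2r : q ^ 2 < r ^ 2 := pow_lt_pow_left₀ hqr hq0 two_ne_zero
  refine Antitone.tsum_neg_one_pow_succ_mul_nonpos (fun i j hij => ?_) ?_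
  · exact radialFactorLogDeriv_le_radialFactorLogDeriv hr0 hr1 (by positivity)
      (antitone_pow_two_mul_succ hq0 hq1.le hij)
      ((pow_two_mul_succ_le_sq hq0 hq1.le i).trans_lt hq2r)
  · exact ((summable_pow_two_mul_succ hq0 hq1).mul_left 2 |>.div_const _).of_norm_bounded
      (norm_neg_one_pow_mul_radialFactorLogDeriv_le hq0 hq1 hqr le_rfl hr1)

theorem hasDerivAt_mityukRadiusRad_neg (hq0 : 0 ≤ q) (hq1 : q < 1) (hqr : q < r) (hr1 : r < 1) :
    ∃ D < 0, HasDerivAt (mityukRadiusRad q) D r := by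
  have hr0 : 0 < r := hq0.trans_lt hqr
  have hr2 : 0 ≤ 1 - r ^ 2 := by nlinarith
  have hT' := tsum_neg_one_pow_mul_radialFactorLogDeriv_nonpos hq0 hq1 hqr hr1
  have h1 : HasDerivAt (fun y : ℝ => 1 - y ^ 2) (-(2 * r)) r :=
    ((hasDerivAt_pow 2 r).const_sub 1).congr_deriv (by norm_num)
  have hf := h1.mul (hasDerivAt_tsum_log_mityukFactor hq0 hq1 hqr hr1).exp
  refine ⟨_, ?_, hf.congr_of_eventuallyEq ?_⟩
  · have hexp := exp_pos (∑' j, log (mityukFactor q j r))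
    have := mul_nonpos_of_nonneg_of_nonpos hr2 (mul_nonpos_of_nonneg_of_nonpos hexp.le hT')
    linarith [mul_pos hr0 hexp]
  · filter_upwards [Ioo_mem_nhds hqr hr1] with y hy
    exact mityukRadiusRad_eq_mul_exp hq0 hq1 hy.1 hy.2

end MityukRadius

/-- For `0 < q < 1`, `f = mityukRadiusRad q` is strictly monotone
decreasing on `(q,1)`; in particular it has no critical points in `(q,1)`. -/
theorem mityuk_stmt9 (q : ℝ) (hq0 : 0 < q) (hq1 : q < 1) :
    StrictAntiOn (mityukRadiusRad q) (Set.Ioo q 1) ∧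
    ∀ r ∈ Set.Ioo q 1, deriv (mityukRadiusRad q) r ≠ 0 := by
  have key r (hr : r ∈ Ioo q 1) := hasDerivAt_mityukRadiusRad_neg hq0.le hq1 hr.1 hr.2
  refine ⟨strictAntiOn_of_deriv_neg (convex_Ioo q 1) (fun r hr => ?_) (fun r hr => ?_),
    fun r hr => ?_⟩
  · obtain ⟨D, -, hD⟩ := key r hr
    exact hD.continuousAt.continuousWithinAt
  · rw [interior_Ioo] at hr
    obtain ⟨D, hD_neg, hD⟩ := key r hr
    rwa [hD.deriv]
  · obtain ⟨D, hD_neg, hD⟩ := key r hr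
    rw [hD.deriv]
    exact hD_neg.ne
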